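/- For any L ∈ ℕ there exists φ ∈ NN_{2,1}(8, 2L) such that φ(x,ℓ) = x_ℓ for every x of the form x = Σ_{j=1}^L x_j 2^{−j} with x_j ∈ {0,1} and every ℓ ∈ {1,2,…,L}. Furthermore, |φ(x,ℓ) − φ(x′,ℓ′)| ≤ 2·2^{L²}·|x−x′| + L·|ℓ−ℓ′| for all x, x′, ℓ, ℓ′ ∈ ℝ. -/

import Mathlib

open Finset
open scoped BigOperators

/-- ReLU activation. -/
noncomputable def relu (x : ℝ) : ℝ := max x 0

/-- Parameters of a fully connected feed-forward ReLU neural network with input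
dimension `d` and output dimension `k`. -/
structure MLP (d k : ℕ) where
  depth : ℕ
  width : ℕ → ℕ
  width_in : width 0 = d
  width_out : width (depth + 1) = k
  A : (ℓ : ℕ) → Matrix (Fin (width (ℓ + 1))) (Fin (width ℓ)) ℝ
  b : (ℓ : ℕ) → Fin (width (ℓ + 1)) → ℝ

namespace MLP

variable {d k : ℕ}

/-- Hidden layer outputs: `φ₀(x) = x`, `φ_{ℓ+1}(x) = σ(A_ℓ φ_ℓ(x) + b_ℓ)`. -/
noncomputable def layer (φ : MLP d k) (x : Fin d → ℝ) : (ℓ : ℕ) → Fin (φ.width ℓ) → ℝ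
  | 0 => fun i => x (Fin.cast φ.width_in i)
  | ℓ + 1 => fun i => relu ((φ.A ℓ).mulVec (layer φ x ℓ) i + φ.b ℓ i)

/-- The function computed by the network: `φ(x) = A_L φ_L(x) + b_L`. -/
noncomputable def eval (φ : MLP d k) (x : Fin d → ℝ) : Fin k → ℝ := fun j =>
  (φ.A φ.depth).mulVec (φ.layer x φ.depth) (Fin.cast φ.width_out.symm j) +
    φ.b φ.depth (Fin.cast φ.width_out.symm j)

/-- Maximum ℓ¹-norm of the rows of the augmented matrix `(A, b)`. -/
noncomputable def augNorm {m n : ℕ} (A : Matrix (Fin m) (Fin n) ℝ) (b : Fin m → ℝ) : ℝ :=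
  ⨆ i : Fin m, ((∑ j, |A i j|) + |b i|)

/-- The norm constraint `κ(θ) = ‖(A_L,b_L)‖ ∏_{ℓ<L} max{‖(A_ℓ,b_ℓ)‖, 1}`. -/
noncomputable def kappa (φ : MLP d k) : ℝ :=
  augNorm (φ.A φ.depth) (φ.b φ.depth) *
    ∏ ℓ ∈ Finset.range φ.depth, max (augNorm (φ.A ℓ) (φ.b ℓ)) 1

end MLP

/-- The class `NN_{d,k}(W, L)` of ReLU networks with width at most `W` and depth `L`. -/
def NNSet (d k W L : ℕ) : Set ((Fin d → ℝ) → Fin k → ℝ) :=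
  {f | ∃ φ : MLP d k, φ.depth = L ∧ (∀ ℓ, 1 ≤ ℓ → ℓ ≤ L → φ.width ℓ ≤ W) ∧ f = φ.eval}

/-- The norm-constrained class `NN_{d,k}(W, L, K)`. -/
def NNSetNorm (d k W L : ℕ) (K : ℝ) : Set ((Fin d → ℝ) → Fin k → ℝ) :=
  {f | ∃ φ : MLP d k, φ.depth = L ∧ (∀ ℓ, 1 ≤ ℓ → ℓ ≤ L → φ.width ℓ ≤ W) ∧
      φ.kappa ≤ K ∧ f = φ.eval}

/-- Scalar-valued networks `NN_{d,1}(W, L)`, viewed as maps `ℝ^d → ℝ`. -/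
def NNScalar (d W L : ℕ) : Set ((Fin d → ℝ) → ℝ) :=
  {f | ∃ g ∈ NNSet d 1 W L, f = fun x => g x 0}

/-- Scalar-valued norm-constrained networks `NN_{d,1}(W, L, K)`, viewed as maps `ℝ^d → ℝ`. -/
def NNScalarNorm (d W L : ℕ) (K : ℝ) : Set ((Fin d → ℝ) → ℝ) :=
  {f | ∃ g ∈ NNSetNorm d 1 W L K, f = fun x => g x 0}

/-- Networks `NN_{1,k}(W, L)` with one-dimensional input, viewed as maps `ℝ → ℝ^k`. -/
def NNFromReal (k W L : ℕ) : Set (ℝ → Fin k → ℝ) :=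
  {f | ∃ g ∈ NNSet 1 k W L, f = fun t => g (fun _ => t)}

/-- Norm-constrained networks `NN_{1,1}(W, L, K)`, viewed as maps `ℝ → ℝ`. -/
def NNRealScalarNorm (W L : ℕ) (K : ℝ) : Set (ℝ → ℝ) :=
  {f | ∃ g ∈ NNSetNorm 1 1 W L K, f = fun t => g (fun _ => t) 0}

open scoped Matrix

/-!
The network reads the binary digits of `x` one at a time along the doubling map. With
`r₀ = σ(x)`, the `(k+1)`-st digit is `ramp(r_k)`, where `ramp` rises linearly from `0` at
`1/2 - 2^{k-L}` to `1` at `1/2`; on the grid `x = ∑ x_j 2^{-j}` the remainder `r_k` is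
`∑_{j>k} x_j 2^{k-j}`, which never falls strictly inside that interval, and
`r_{k+1} = σ(2 r_k - ramp(r_k))`. The tent function of `ℓ` centred at `k + 1` then selects the
`ℓ`-th digit as `∑_k σ(ramp(r_k) + tent(ℓ - (k+1)) - 1)`. Each digit costs two layers of
width 8, which carry `r_k`, `σ(ℓ)` and the running sum.

For the Lipschitz bound, step `k` multiplies the Lipschitz constant of `r_k` by at most
`2 + 2^{L-k}`, and `∏_{k<L} (2 + 2^{L-k}) ≤ 2^{∑_k (L-k+1)} ≤ 2 · 2^{L²}`.
-/

lemma relu_nonneg (x : ℝ) : 0 ≤ relu x := le_max_right x 0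

lemma relu_of_nonneg {x : ℝ} (h : 0 ≤ x) : relu x = x := max_eq_left h

lemma relu_of_nonpos {x : ℝ} (h : x ≤ 0) : relu x = 0 := max_eq_right h

lemma abs_relu_sub_relu_le (s t : ℝ) : |relu s - relu t| ≤ |s - t| :=
  abs_max_sub_max_le_abs s t 0

lemma relu_relu_sub {c : ℝ} (hc : 0 ≤ c) (t : ℝ) : relu (relu t - c) = relu (t - c) := by
  rcases le_total t 0 with h | h
  · rw [relu_of_nonpos h, relu_of_nonpos (by linarith), relu_of_nonpos (by linarith)]
  · rw [relu_of_nonneg h]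

lemma relu_sub_relu_sub {g : ℝ} (hg : 0 ≤ g) (u : ℝ) :
    relu u - relu (u - g) = min (relu u) g := by
  rcases le_total u 0 with h | h
  · rw [relu_of_nonpos h, relu_of_nonpos (by linarith), min_eq_left hg, sub_zero]
  · rcases le_total u g with h' | h'
    · rw [relu_of_nonneg h, relu_of_nonpos (by linarith), min_eq_left h', sub_zero]
    · rw [relu_of_nonneg h, relu_of_nonneg (by linarith), min_eq_right h']
      ring

noncomputable def tent (u : ℝ) : ℝ := max 0 (1 - |u|)

lemma relu_add_one_sub_two_mul_relu_add_relu_sub_one (u : ℝ) :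
    relu (u + 1) - 2 * relu u + relu (u - 1) = tent u := by
  unfold tent
  rcases le_total u 0 with h | h
  · rw [relu_of_nonpos h, abs_of_nonpos h]
    rcases le_total u (-1) with h1 | h1
    · rw [relu_of_nonpos (by linarith), relu_of_nonpos (by linarith), max_eq_left (by linarith)]
      ring
    · rw [relu_of_nonneg (by linarith), relu_of_nonpos (by linarith), max_eq_right (by linarith)]
      ring
  · rw [relu_of_nonneg h, abs_of_nonneg h]
    rcases le_total u 1 with h1 | h1
    · rw [relu_of_nonneg (by linarith), relu_of_nonpos (by linarith), max_eq_right (by linarith)]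
      ring
    · rw [relu_of_nonneg (by linarith), relu_of_nonneg (by linarith), max_eq_left (by linarith)]
      ring

lemma tent_intCast (n : ℤ) : tent n = if n = 0 then 1 else 0 := by
  unfold tent
  split_ifs with h
  · simp [h]
  · have : (1 : ℝ) ≤ |(n : ℝ)| := by exact_mod_cast Int.one_le_abs h
    exact max_eq_left (by linarith)

lemma abs_tent_sub_tent_le (u v : ℝ) : |tent u - tent v| ≤ |u - v| := by
  unfold tent
  rw [max_comm 0, max_comm 0]
  calc |max (1 - |u|) 0 - max (1 - |v|) 0| ≤ |(1 - |u|) - (1 - |v|)| :=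
        abs_max_sub_max_le_abs _ _ _
    _ = abs (|v| - |u|) := by ring_nf
    _ ≤ |v - u| := abs_abs_sub_abs_le_abs_sub v u
    _ = |u - v| := abs_sub_comm v u

noncomputable def ramp (g t : ℝ) : ℝ := g⁻¹ * (relu (t - (1 / 2 - g)) - relu (t - 1 / 2))

lemma ramp_of_le {g t : ℝ} (hg : 0 < g) (ht : t ≤ 1 / 2 - g) : ramp g t = 0 := by
  rw [ramp, relu_of_nonpos (by linarith), relu_of_nonpos (by linarith)]
  ring

lemma ramp_of_ge {g t : ℝ} (hg : 0 < g) (ht : 1 / 2 ≤ t) : ramp g t = 1 := by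
  rw [ramp, relu_of_nonneg (by linarith), relu_of_nonneg (by linarith)]
  field_simp
  ring

lemma abs_ramp_sub_ramp_le {g : ℝ} (hg : 0 < g) (s t : ℝ) :
    |ramp g s - ramp g t| ≤ g⁻¹ * |s - t| := by
  have hclamp : ∀ t, ramp g t = g⁻¹ * min (relu (t - (1 / 2 - g))) g := fun t => by
    rw [ramp, ← relu_sub_relu_sub hg.le]
    ring_nf
  rw [hclamp, hclamp, ← mul_sub, abs_mul, abs_of_pos (inv_pos.2 hg)]
  refine mul_le_mul_of_nonneg_left ?_ (inv_nonneg.2 hg.le)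
  calc |min (relu (s - (1 / 2 - g))) g - min (relu (t - (1 / 2 - g))) g|
      ≤ max |relu (s - (1 / 2 - g)) - relu (t - (1 / 2 - g))| |g - g| :=
        abs_min_sub_min_le_max _ _ _ _
    _ ≤ |(s - (1 / 2 - g)) - (t - (1 / 2 - g))| := by
        rw [sub_self, abs_zero, max_eq_left (abs_nonneg _)]
        exact abs_relu_sub_relu_le _ _
    _ = |s - t| := by ring_nf

/- Zero-padding to `ℕ`-indexed entries avoids casts between `Fin (φ.width ℓ)` and the
`Fin n` of a concrete matrix. -/
def padMat {m n : ℕ} (M : Matrix (Fin m) (Fin n) ℝ) (i j : ℕ) : ℝ :=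
  if h : i < m ∧ j < n then M ⟨i, h.1⟩ ⟨j, h.2⟩ else 0

def padVec {n : ℕ} (v : Fin n → ℝ) (i : ℕ) : ℝ :=
  if h : i < n then v ⟨i, h⟩ else 0

lemma padVec_eq_apply_cast {p n : ℕ} (v : Fin n → ℝ) (h : p = n) (i : Fin p) :
    padVec v i = v (Fin.cast h i) := by
  subst h
  simp [padVec]

lemma mulVec_apply_eq_sum_range {m n : ℕ} (M : Matrix (Fin m) (Fin n) ℝ) (v : Fin n → ℝ)
    (i : Fin m) : (M *ᵥ v) i = ∑ j ∈ range n, padMat M i j * padVec v j := by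
  rw [← Fin.sum_univ_eq_sum_range (fun j => padMat M i j * padVec v j)]
  simp [Matrix.mulVec, dotProduct, padMat, padVec]

noncomputable def reluLayer {m n : ℕ} (A : Matrix (Fin m) (Fin n) ℝ) (b : Fin m → ℝ)
    (v : Fin n → ℝ) : Fin m → ℝ :=
  fun i => relu ((A *ᵥ v) i + b i)

namespace MLP

variable {d k : ℕ}

lemma mulVec_layer_add_bias_eq (φ : MLP d k) (x : Fin d → ℝ) (ℓ : ℕ) {m n : ℕ}
    (M : Matrix (Fin m) (Fin n) ℝ) (c : Fin m → ℝ) (v : Fin n → ℝ)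
    (hn : φ.width ℓ = n) (hm : φ.width (ℓ + 1) = m)
    (hA : ∀ i j, φ.A ℓ i j = padMat M i j) (hb : ∀ i, φ.b ℓ i = padVec c i)
    (hv : ∀ j, φ.layer x ℓ j = padVec v j) (i : Fin (φ.width (ℓ + 1))) :
    (φ.A ℓ *ᵥ φ.layer x ℓ) i + φ.b ℓ i = (M *ᵥ v + c) (Fin.cast hm i) := by
  have hsum : (φ.A ℓ *ᵥ φ.layer x ℓ) i
      = ∑ j ∈ range (φ.width ℓ), padMat M i j * padVec v j := by
    rw [← Fin.sum_univ_eq_sum_range (fun j => padMat M i j * padVec v j)]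
    simp only [Matrix.mulVec, dotProduct, hA, hv]
  have hi : (i : ℕ) < m := hm ▸ i.isLt
  rw [Pi.add_apply, hsum, hn, hb, mulVec_apply_eq_sum_range]
  simp [padVec, hi]
  rfl

variable {W : ℕ}

noncomputable def ofChain (L : ℕ) (A₀ : Matrix (Fin W) (Fin d) ℝ) (b₀ : Fin W → ℝ)
    (A : ℕ → Matrix (Fin W) (Fin W) ℝ) (b : ℕ → Fin W → ℝ)
    (Aₒ : Matrix (Fin k) (Fin W) ℝ) (bₒ : Fin k → ℝ) : MLP d k where
  depth := L
  width m := if m = 0 then d else if m = L + 1 then k else W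
  width_in := if_pos rfl
  width_out := by simp
  A ℓ i j := if ℓ = 0 then padMat A₀ i j else if ℓ = L then padMat Aₒ i j
    else padMat (A (ℓ - 1)) i j
  b ℓ i := if ℓ = 0 then padVec b₀ i else if ℓ = L then padVec bₒ i else padVec (b (ℓ - 1)) i

theorem mem_NNSet_of_chain {L : ℕ} (hL : 1 ≤ L) (A₀ : Matrix (Fin W) (Fin d) ℝ)
    (b₀ : Fin W → ℝ) (A : ℕ → Matrix (Fin W) (Fin W) ℝ) (b : ℕ → Fin W → ℝ)
    (Aₒ : Matrix (Fin k) (Fin W) ℝ) (bₒ : Fin k → ℝ) (h : (Fin d → ℝ) → ℕ → Fin W → ℝ)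
    (h_zero : ∀ x, h x 0 = reluLayer A₀ b₀ x)
    (h_succ : ∀ x m, m + 1 < L → h x (m + 1) = reluLayer (A m) (b m) (h x m)) :
    (fun x => Aₒ *ᵥ h x (L - 1) + bₒ) ∈ NNSet d k W L := by
  set φ : MLP d k := ofChain L A₀ b₀ A b Aₒ bₒ
  have hwidth : ∀ m, m ≠ 0 → m ≠ L + 1 → φ.width m = W := fun m h0 h1 => by
    simp [φ, ofChain, h0, h1]
  have hlayer : ∀ x m, m < L → ∀ i, φ.layer x (m + 1) i = padVec (h x m) i := by
    intro x m
    induction m with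
    | zero =>
      intro _ i
      have hv : ∀ j, φ.layer x 0 j = padVec x j := fun j => by
        rw [padVec_eq_apply_cast x φ.width_in]
        rfl
      rw [MLP.layer]
      dsimp only
      rw [mulVec_layer_add_bias_eq φ x 0 A₀ b₀ x φ.width_in (hwidth 1 one_ne_zero (by omega))
        (fun i j => by simp [φ, ofChain]) (fun i => by simp [φ, ofChain]) hv, h_zero,
        padVec_eq_apply_cast _ (hwidth 1 one_ne_zero (by omega))]
      rfl
    | succ m ih =>
      intro hm i
      rw [MLP.layer]
      dsimp only
      rw [mulVec_layer_add_bias_eq φ x (m + 1) (A m) (b m) (h x m)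
        (hwidth _ (by omega) (by omega)) (hwidth _ (by omega) (by omega))
        (fun i j => by simp [φ, ofChain]; omega) (fun i => by simp [φ, ofChain]; omega)
        (ih (by omega)), h_succ x m hm, padVec_eq_apply_cast _ (hwidth _ (by omega) (by omega))]
      rfl
  refine ⟨φ, rfl, fun ℓ h1 h2 => (hwidth ℓ (by omega) (by omega)).le, ?_⟩
  funext x j
  obtain ⟨n, rfl⟩ : ∃ n, L = n + 1 := ⟨L - 1, by omega⟩
  exact (mulVec_layer_add_bias_eq φ x (n + 1) Aₒ bₒ (h x n) (hwidth _ (by omega) (by omega))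
    φ.width_out (fun i j => by simp [φ, ofChain]) (fun i => by simp [φ, ofChain])
    (hlayer x n (by omega)) (Fin.cast φ.width_out.symm j)).symm

end MLP

lemma nonneg_of_bit {β : ℝ} (h : β = 0 ∨ β = 1) : 0 ≤ β := by
  rcases h with h | h <;> simp [h]

lemma le_one_of_bit {β : ℝ} (h : β = 0 ∨ β = 1) : β ≤ 1 := by
  rcases h with h | h <;> simp [h]

section BinaryTail

variable (b : ℕ → ℝ) (L : ℕ)

noncomputable def binTail (k : ℕ) : ℝ := ∑ j ∈ Icc (k + 1) L, b j * 2 ^ ((k : ℤ) - j)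

lemma binTail_zero : binTail b L 0 = ∑ j ∈ Icc 1 L, b j * (2 : ℝ) ^ (-(j : ℤ)) := by
  simp [binTail]

lemma binTail_self : binTail b L L = 0 := by
  simp [binTail]

lemma binTail_eq_half {k : ℕ} (hk : k < L) :
    binTail b L k = (b (k + 1) + binTail b L (k + 1)) / 2 := by
  have hIcc : Icc (k + 1) L = insert (k + 1) (Icc (k + 2) L) := by
    ext j; simp only [mem_Icc, mem_insert]; omega
  rw [binTail, binTail, hIcc, sum_insert (by simp), add_div, sum_div]
  congr 1
  · rw [show ((k : ℤ) - ((k + 1 : ℕ) : ℤ)) = -1 by push_cast; ring]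
    simp [div_eq_mul_inv]
  · refine sum_congr rfl fun j _ => ?_
    rw [show ((k + 1 : ℕ) : ℤ) - j = ((k : ℤ) - j) + 1 by push_cast; ring,
      zpow_add_one₀ two_ne_zero]
    ring

variable {b L}

lemma binTail_nonneg (hb : ∀ j, 0 ≤ b j) (k : ℕ) : 0 ≤ binTail b L k :=
  sum_nonneg fun j _ => mul_nonneg (hb j) (by positivity)

lemma binTail_le (hb : ∀ j, b j ≤ 1) {k : ℕ} (hk : k ≤ L) :
    binTail b L k ≤ 1 - ((2 : ℝ) ^ (L - k))⁻¹ := by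
  induction hk using Nat.decreasingInduction with
  | self => simp [binTail_self]
  | of_succ k hk ih =>
    rw [binTail_eq_half b L hk, show L - k = (L - (k + 1)) + 1 by omega, pow_succ, mul_inv]
    linarith [hb (k + 1)]

lemma ramp_binTail (hb : ∀ j, b j = 0 ∨ b j = 1) {k : ℕ} (hk : k < L) :
    ramp ((2 : ℝ) ^ (L - k))⁻¹ (binTail b L k) = b (k + 1) := by
  have hg : (0 : ℝ) < ((2 : ℝ) ^ (L - k))⁻¹ := by positivity
  have hle := binTail_le (fun j => le_one_of_bit (hb j)) hk
  have hnonneg := binTail_nonneg (L := L) (fun j => nonneg_of_bit (hb j))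
  rw [binTail_eq_half b L hk]
  rcases hb (k + 1) with hbit | hbit <;> rw [hbit]
  · refine ramp_of_le hg ?_
    rw [show L - k = (L - (k + 1)) + 1 by omega, pow_succ, mul_inv]
    linarith
  · exact ramp_of_ge hg (by linarith [hnonneg (k + 1)])

end BinaryTail

section BitExtractor

variable (L : ℕ)

noncomputable def remainder (x : ℝ) : ℕ → ℝ
  | 0 => relu x
  | k + 1 => relu (2 * remainder x k - ramp ((2 : ℝ) ^ (L - k))⁻¹ (remainder x k))

noncomputable def bitTerm (k : ℕ) (x l : ℝ) : ℝ :=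
  relu (ramp ((2 : ℝ) ^ (L - k))⁻¹ (remainder L x k) + tent (l - (k + 1)) - 1)

noncomputable def bitSum (k : ℕ) (x l : ℝ) : ℝ := ∑ j ∈ range k, bitTerm L j x l

lemma remainder_nonneg (x : ℝ) (k : ℕ) : 0 ≤ remainder L x k := by
  cases k <;> exact relu_nonneg _

lemma bitSum_nonneg (k : ℕ) (x l : ℝ) : 0 ≤ bitSum L k x l :=
  sum_nonneg fun _ _ => relu_nonneg _

variable {L}

lemma remainder_binTail {b : ℕ → ℝ} (hb : ∀ j, b j = 0 ∨ b j = 1) {k : ℕ} (hk : k ≤ L) :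
    remainder L (binTail b L 0) k = binTail b L k := by
  induction k with
  | zero => exact relu_of_nonneg (binTail_nonneg (fun j => nonneg_of_bit (hb j)) 0)
  | succ k ih =>
    rw [remainder, ih (by omega), ramp_binTail hb (by omega), binTail_eq_half b L (by omega)]
    rw [show 2 * ((b (k + 1) + binTail b L (k + 1)) / 2) - b (k + 1) = binTail b L (k + 1) by
      ring]
    exact relu_of_nonneg (binTail_nonneg (fun j => nonneg_of_bit (hb j)) _)

lemma bitTerm_binTail_natCast {b : ℕ → ℝ} (hb : ∀ j, b j = 0 ∨ b j = 1) {k : ℕ} (hk : k < L)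
    (n : ℕ) : bitTerm L k (binTail b L 0) n = if n = k + 1 then b (k + 1) else 0 := by
  have htent : tent ((n : ℝ) - (k + 1)) = if n = k + 1 then 1 else 0 := by
    rw [show (n : ℝ) - (k + 1) = ((n - (k + 1) : ℤ) : ℝ) by push_cast; ring, tent_intCast]
    simp only [sub_eq_zero]
    norm_cast
  rw [bitTerm, remainder_binTail hb hk.le, ramp_binTail hb hk, htent]
  split_ifs
  · rw [add_sub_cancel_right]
    exact relu_of_nonneg (nonneg_of_bit (hb (k + 1)))
  · rw [add_zero]
    exact relu_of_nonpos (by linarith [le_one_of_bit (hb (k + 1))])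

lemma bitSum_binTail_natCast {b : ℕ → ℝ} (hb : ∀ j, b j = 0 ∨ b j = 1) {n : ℕ} (hn₁ : 1 ≤ n)
    (hn : n ≤ L) : bitSum L L (binTail b L 0) n = b n := by
  rw [bitSum, sum_congr rfl fun k hk => bitTerm_binTail_natCast hb (mem_range.1 hk) n]
  rw [sum_eq_single (n - 1) (fun k _ hk => if_neg (by omega))
    (fun h => absurd (mem_range.2 (by omega)) h), if_pos (by omega), Nat.sub_add_cancel hn₁]

end BitExtractor

lemma sum_mul_prod_le_prod {c : ℕ → ℝ} (hc : ∀ j, 0 ≤ c j) (n : ℕ) :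
    ∑ k ∈ range n, c k * ∏ j ∈ range k, (2 + c j) ≤ ∏ j ∈ range n, (2 + c j) := by
  induction n with
  | zero => simp
  | succ n ih =>
    have hprod : 0 ≤ ∏ j ∈ range n, (2 + c j) := prod_nonneg fun j _ => by linarith [hc j]
    rw [sum_range_succ, prod_range_succ]
    nlinarith

lemma two_mul_sum_range_add_two (n : ℕ) : 2 * ∑ i ∈ range n, (i + 2) = n ^ 2 + 3 * n := by
  induction n with
  | zero => simp
  | succ n ih =>
    rw [sum_range_succ, mul_add, ih]
    ring

lemma prod_two_add_two_pow_le (L : ℕ) :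
    ∏ j ∈ range L, (2 + (2 : ℝ) ^ (L - j)) ≤ 2 * 2 ^ (L ^ 2) := by
  have hfactor : ∀ j ∈ range L, 2 + (2 : ℝ) ^ (L - j) ≤ 2 ^ (L - j + 1) := fun j hj => by
    have : (2 : ℝ) ^ 1 ≤ 2 ^ (L - j) :=
      pow_le_pow_right₀ one_le_two (by have := mem_range.1 hj; omega)
    rw [pow_succ]
    linarith
  have hexp : ∑ j ∈ range L, (L - j + 1) ≤ L ^ 2 + 1 := by
    have hreflect : ∑ j ∈ range L, (L - j + 1) = ∑ i ∈ range L, (i + 2) :=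
      (sum_congr rfl fun j hj => by have := mem_range.1 hj; omega).trans
        (sum_range_reflect (fun i => i + 2) L)
    have hgauss := two_mul_sum_range_add_two L
    rw [hreflect]
    rcases Nat.lt_or_ge L 3 with hL | hL
    · interval_cases L <;> omega
    · nlinarith
  calc ∏ j ∈ range L, (2 + (2 : ℝ) ^ (L - j))
      ≤ ∏ j ∈ range L, (2 : ℝ) ^ (L - j + 1) :=
        prod_le_prod (fun j _ => by positivity) hfactor
    _ = 2 ^ ∑ j ∈ range L, (L - j + 1) := prod_pow_eq_pow_sum _ _ _
    _ ≤ 2 ^ (L ^ 2 + 1) := pow_le_pow_right₀ one_le_two hexp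
    _ = 2 * 2 ^ (L ^ 2) := by ring

section Lipschitz

variable (L : ℕ)

lemma abs_remainder_sub_le (k : ℕ) (x x' : ℝ) :
    |remainder L x k - remainder L x' k|
      ≤ (∏ j ∈ range k, (2 + (2 : ℝ) ^ (L - j))) * |x - x'| := by
  induction k with
  | zero => simpa [remainder] using abs_relu_sub_relu_le x x'
  | succ k ih =>
    rw [remainder, remainder]
    set g : ℝ := ((2 : ℝ) ^ (L - k))⁻¹
    set r := remainder L x k
    set r' := remainder L x' k
    have hramp := abs_ramp_sub_ramp_le (g := g) (by positivity) r r'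
    rw [inv_inv] at hramp
    calc _ ≤ |2 * (r - r') - (ramp g r - ramp g r')| :=
          (abs_relu_sub_relu_le _ _).trans_eq (by congr 1; ring)
      _ ≤ 2 * |r - r'| + 2 ^ (L - k) * |r - r'| := by
          refine (abs_sub _ _).trans ?_
          rw [abs_mul, abs_two]
          linarith
      _ ≤ (∏ j ∈ range (k + 1), (2 + (2 : ℝ) ^ (L - j))) * |x - x'| := by
          rw [prod_range_succ, ← add_mul, mul_comm _ (2 + _), mul_assoc]
          exact mul_le_mul_of_nonneg_left ih (by positivity)

lemma abs_bitTerm_sub_le (k : ℕ) (x x' l l' : ℝ) :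
    |bitTerm L k x l - bitTerm L k x' l'|
      ≤ 2 ^ (L - k) * (∏ j ∈ range k, (2 + (2 : ℝ) ^ (L - j))) * |x - x'| + |l - l'| := by
  rw [bitTerm, bitTerm]
  set g : ℝ := ((2 : ℝ) ^ (L - k))⁻¹
  set r := remainder L x k
  set r' := remainder L x' k
  have hramp := abs_ramp_sub_ramp_le (g := g) (by positivity) r r'
  rw [inv_inv] at hramp
  have htent := abs_tent_sub_tent_le (l - (k + 1)) (l' - (k + 1))
  rw [sub_sub_sub_cancel_right] at htent
  calc _ ≤ |(ramp g r - ramp g r') + (tent (l - (k + 1)) - tent (l' - (k + 1)))| :=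
        (abs_relu_sub_relu_le _ _).trans_eq (by congr 1; ring)
    _ ≤ 2 ^ (L - k) * |r - r'| + |l - l'| := (abs_add_le _ _).trans (add_le_add hramp htent)
    _ ≤ _ := by
        rw [mul_assoc]
        gcongr
        exact abs_remainder_sub_le L k x x'

lemma abs_bitSum_sub_le (x x' l l' : ℝ) :
    |bitSum L L x l - bitSum L L x' l'| ≤ 2 * 2 ^ (L ^ 2) * |x - x'| + L * |l - l'| := by
  have hcoef := sum_mul_prod_le_prod (c := fun j => (2 : ℝ) ^ (L - j)) (fun j => by positivity) L
  calc |bitSum L L x l - bitSum L L x' l'|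
      ≤ ∑ k ∈ range L, |bitTerm L k x l - bitTerm L k x' l'| := by
        rw [bitSum, bitSum, ← sum_sub_distrib]
        exact abs_sum_le_sum_abs _ _
    _ ≤ ∑ k ∈ range L, (2 ^ (L - k) * (∏ j ∈ range k, (2 + (2 : ℝ) ^ (L - j))) * |x - x'|
          + |l - l'|) := sum_le_sum fun k _ => abs_bitTerm_sub_le L k x x' l l'
    _ = (∑ k ∈ range L, 2 ^ (L - k) * ∏ j ∈ range k, (2 + (2 : ℝ) ^ (L - j))) * |x - x'|
          + L * |l - l'| := by
        rw [sum_add_distrib, sum_mul, sum_const, card_range, nsmul_eq_mul]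
    _ ≤ 2 * 2 ^ (L ^ 2) * |x - x'| + L * |l - l'| := by
        gcongr
        exact hcoef.trans (prod_two_add_two_pow_le L)

end Lipschitz

section Network

noncomputable def inputMatrix : Matrix (Fin 8) (Fin 2) ℝ :=
  !![1, 0; 1, 0; 1, 0; 0, 1; 0, 1; 0, 1; 0, 0; 0, 1]

noncomputable def splitMatrix : Matrix (Fin 8) (Fin 8) ℝ :=
  !![1, 0, 0, 0, 0, 0, 0, 0;
     1, 0, 0, 0, 0, 0, 0, 0;
     1, 0, 0, 0, 0, 0, 0, 0;
     0, 0, 0, 1, 0, 0, 0, 0;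
     0, 0, 0, 1, 0, 0, 0, 0;
     0, 0, 0, 1, 0, 0, 0, 0;
     0, 1, 1, 0, 0, 0, 0, 0;
     0, 0, 0, 1, 0, 0, 0, 0]

noncomputable def splitBias (g c : ℝ) : Fin 8 → ℝ :=
  ![0, -(1 / 2 - g), -(1 / 2), -c, -(c + 1), -(c + 2), 0, 0]

noncomputable def mergeMatrix (g : ℝ) : Matrix (Fin 8) (Fin 8) ℝ :=
  !![2, -g⁻¹, g⁻¹, 0, 0, 0, 0, 0;
     0, g⁻¹, -g⁻¹, 1, -2, 1, 0, 0;
     0, 0, 0, 0, 0, 0, 1, 0;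
     0, 0, 0, 0, 0, 0, 0, 1;
     0, 0, 0, 0, 0, 0, 0, 0;
     0, 0, 0, 0, 0, 0, 0, 0;
     0, 0, 0, 0, 0, 0, 0, 0;
     0, 0, 0, 0, 0, 0, 0, 0]

noncomputable def mergeBias : Fin 8 → ℝ := ![0, -1, 0, 0, 0, 0, 0, 0]

noncomputable def outputMatrix : Matrix (Fin 1) (Fin 8) ℝ := !![0, 1, 1, 0, 0, 0, 0, 0]

lemma reluLayer_inputMatrix (g : ℝ) (v : Fin 2 → ℝ) :
    reluLayer inputMatrix (splitBias g 0) v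
      = ![relu (v 0), relu (v 0 - (1 / 2 - g)), relu (v 0 - 1 / 2), relu (v 1), relu (v 1 - 1),
          relu (v 1 - 2), 0, relu (v 1)] := by
  ext i
  fin_cases i <;>
    simp [reluLayer, inputMatrix, splitBias, relu, Matrix.vecHead, Matrix.vecTail] <;> ring_nf

lemma reluLayer_splitMatrix (g c r w s t e₄ e₅ e₆ e₇ : ℝ) :
    reluLayer splitMatrix (splitBias g c) ![r, w, s, t, e₄, e₅, e₆, e₇]
      = ![relu r, relu (r - (1 / 2 - g)), relu (r - 1 / 2), relu (t - c), relu (t - (c + 1)),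
          relu (t - (c + 2)), relu (w + s), relu t] := by
  ext i
  fin_cases i <;> simp [reluLayer, splitMatrix, splitBias] <;> ring_nf

lemma reluLayer_mergeMatrix (g r p q u₀ u₁ u₂ s t : ℝ) :
    reluLayer (mergeMatrix g) mergeBias ![r, p, q, u₀, u₁, u₂, s, t]
      = ![relu (2 * r - g⁻¹ * (p - q)), relu (g⁻¹ * (p - q) + (u₀ - 2 * u₁ + u₂) - 1), relu s,
          relu t, 0, 0, 0, 0] := by
  ext i
  fin_cases i <;> simp [reluLayer, mergeMatrix, mergeBias, relu] <;> ring_nf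

variable (L : ℕ)

/- Hidden layer `2k + 1` of the network outputs `splitState L k x l`, hidden layer `2k + 2`
outputs `mergeState L k x l`. -/
noncomputable def splitState (k : ℕ) (x l : ℝ) : Fin 8 → ℝ :=
  ![remainder L x k, relu (remainder L x k - (1 / 2 - ((2 : ℝ) ^ (L - k))⁻¹)),
    relu (remainder L x k - 1 / 2), relu (l - k), relu (l - (k + 1)), relu (l - (k + 2)),
    bitSum L k x l, relu l]

noncomputable def mergeState (k : ℕ) (x l : ℝ) : Fin 8 → ℝ :=
  ![remainder L x (k + 1), bitTerm L k x l, bitSum L k x l, relu l, 0, 0, 0, 0]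

lemma reluLayer_inputMatrix_eq_splitState {L : ℕ} (hL : 1 ≤ L) (v : Fin 2 → ℝ) :
    reluLayer inputMatrix (splitBias ((2 : ℝ) ^ L)⁻¹ 0) v = splitState L 0 (v 0) (v 1) := by
  have hg : ((2 : ℝ) ^ L)⁻¹ ≤ 1 / 2 := by
    rw [one_div]
    exact inv_anti₀ two_pos (le_self_pow₀ one_le_two (by omega))
  rw [reluLayer_inputMatrix, splitState, remainder, Nat.sub_zero, relu_relu_sub (by linarith),
    relu_relu_sub (by norm_num), bitSum]
  simp

lemma reluLayer_mergeMatrix_splitState (k : ℕ) (x l : ℝ) :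
    reluLayer (mergeMatrix ((2 : ℝ) ^ (L - k))⁻¹) mergeBias (splitState L k x l)
      = mergeState L k x l := by
  have htent := relu_add_one_sub_two_mul_relu_add_relu_sub_one (l - (k + 1))
  rw [show l - (k + 1) + 1 = l - k by ring, show l - (k + 1) - 1 = l - (k + 2) by ring] at htent
  rw [splitState, reluLayer_mergeMatrix, mergeState, remainder, bitTerm, ramp, htent,
    relu_of_nonneg (bitSum_nonneg L k x l), relu_of_nonneg (relu_nonneg l)]

lemma reluLayer_splitMatrix_mergeState (k : ℕ) (x l : ℝ) :
    reluLayer splitMatrix (splitBias ((2 : ℝ) ^ (L - (k + 1)))⁻¹ (k + 1)) (mergeState L k x l)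
      = splitState L (k + 1) x l := by
  rw [mergeState, reluLayer_splitMatrix, splitState, relu_of_nonneg (remainder_nonneg L x _),
    relu_of_nonneg (show 0 ≤ bitTerm L k x l + bitSum L k x l from
      add_nonneg (relu_nonneg _) (bitSum_nonneg L k x l)),
    relu_relu_sub (by positivity), relu_relu_sub (by positivity), relu_relu_sub (by positivity),
    relu_of_nonneg (relu_nonneg l), bitSum, bitSum, sum_range_succ, add_comm]
  push_cast
  ring_nf

end Network

theorem bitSum_mem_NNScalar {L : ℕ} (hL : 1 ≤ L) :
    (fun v : Fin 2 → ℝ => bitSum L L (v 0) (v 1)) ∈ NNScalar 2 8 (2 * L) := by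
  let A : ℕ → Matrix (Fin 8) (Fin 8) ℝ := fun m =>
    if Even m then mergeMatrix ((2 : ℝ) ^ (L - m / 2))⁻¹ else splitMatrix
  let b : ℕ → Fin 8 → ℝ := fun m =>
    if Even m then mergeBias else splitBias ((2 : ℝ) ^ (L - (m / 2 + 1)))⁻¹ (m / 2 + 1 : ℕ)
  let h : (Fin 2 → ℝ) → ℕ → Fin 8 → ℝ := fun v m =>
    if Even m then splitState L (m / 2) (v 0) (v 1) else mergeState L (m / 2) (v 0) (v 1)
  have h_succ : ∀ v m, m + 1 < 2 * L → h v (m + 1) = reluLayer (A m) (b m) (h v m) := by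
    intro v m _
    obtain ⟨k, rfl | rfl⟩ := Nat.even_or_odd' m
    · have hdiv : (2 * k + 1) / 2 = k := by omega
      simp [h, A, b, parity_simps, hdiv, reluLayer_mergeMatrix_splitState]
    · have hdiv : (2 * k + 1) / 2 = k := by omega
      have hdiv' : (2 * k + 1 + 1) / 2 = k + 1 := by omega
      simp [h, A, b, parity_simps, hdiv, hdiv', reluLayer_splitMatrix_mergeState]
  refine ⟨_, MLP.mem_NNSet_of_chain (by omega) inputMatrix (splitBias ((2 : ℝ) ^ L)⁻¹ 0) A b
    outputMatrix 0 h (fun v => ?_) h_succ, ?_⟩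
  · simp [h, reluLayer_inputMatrix_eq_splitState hL]
  · obtain ⟨n, rfl⟩ : ∃ n, L = n + 1 := ⟨L - 1, by omega⟩
    funext v
    have hlast : 2 * (n + 1) - 1 = 2 * n + 1 := by omega
    have hdiv : (2 * n + 1) / 2 = n := by omega
    simp only [h, hlast, hdiv, parity_simps, outputMatrix, mergeState]
    simp [bitSum, sum_range_succ, add_comm]

/-- bit extraction.  For any `L ∈ ℕ` there is `φ ∈ NN_{2,1}(8, 2L)` with
`φ(x, ℓ) = x_ℓ` whenever `x = Bin 0.x₁x₂…x_L` with bits `x_j ∈ {0,1}` and `1 ≤ ℓ ≤ L`;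
moreover `|φ(x,ℓ) − φ(x',ℓ')| ≤ 2·2^{L²}|x−x'| + L|ℓ−ℓ'|` for all real `x, x', ℓ, ℓ'`. -/
theorem statement5 (L : ℕ) (hL : 1 ≤ L) :
    ∃ φ ∈ NNScalar 2 8 (2 * L),
      (∀ b : ℕ → ℝ, (∀ j, b j = 0 ∨ b j = 1) → ∀ ℓ : ℕ, 1 ≤ ℓ → ℓ ≤ L →
        φ ![∑ j ∈ Finset.Icc 1 L, b j * (2 : ℝ) ^ (-(j : ℤ)), (ℓ : ℝ)] = b ℓ) ∧
      (∀ x x' l l' : ℝ,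
        |φ ![x, l] - φ ![x', l']| ≤ 2 * 2 ^ (L ^ 2) * |x - x'| + L * |l - l'|) := by
  refine ⟨_, bitSum_mem_NNScalar hL, fun b hb ℓ hℓ₁ hℓ => ?_, fun x x' l l' => ?_⟩
  · simpa [binTail_zero] using bitSum_binTail_natCast hb hℓ₁ hℓ
  · simpa using abs_bitSum_sub_le L x x' l l'
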